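/- arXiv:2504.21492 — 6 statements merged into one kernel-verified Lean document; each statement's English description precedes it below -/
import Mathlib

section
/- Let n ≥ 1 and let φ : ℝ^n → ℝ be continuous. Let v₁ : ℝ^{n+1} → ℝ be a global solution to the thin obstacle problem with obstacle φ, and let v₂ : ℝ^{n+1} → ℝ be a continuous function satisfying: v₂(x', x_{n+1}) = v₂(x', −x_{n+1}) for all x; v₂(x', 0) ≥ φ(x') for all x' ∈ ℝ^n; and for every x ∈ ℝ^{n+1} and r > 0, v₂(x) is greater than or equal to the average of v₂ over the ball B_r(x) with respect to Lebesgue measure. If liminf_{|x| → ∞} (v₂ − v₁)(x) ≥ 0, then v₂ ≥ v₁ in all of ℝ^{n+1}. -/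
open MeasureTheory Metric Set Filter

noncomputable section

/-- The point `(x', t)` of `ℝ^{n+1}`, where `x' ∈ ℝ^n`. -/
def thinEmbed (n : ℕ) (x' : EuclideanSpace ℝ (Fin n)) (t : ℝ) :
    EuclideanSpace ℝ (Fin (n + 1)) :=
  (EuclideanSpace.equiv (Fin (n + 1)) ℝ).symm (Fin.snoc (fun i => x' i) t)

/-- Projection of a point of `ℝ^{n+1}` to its first `n` coordinates. -/
def thinProj (n : ℕ) (x : EuclideanSpace ℝ (Fin (n + 1))) : EuclideanSpace ℝ (Fin n) :=
  (EuclideanSpace.equiv (Fin n) ℝ).symm (fun i => x i.castSucc)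

/-- The Laplacian of `f : ℝ^d → ℝ`: the sum of pure second partial derivatives. -/
def lapl (d : ℕ) (f : EuclideanSpace ℝ (Fin d) → ℝ) (x : EuclideanSpace ℝ (Fin d)) : ℝ :=
  ∑ i : Fin d,
    fderiv ℝ (fun y => fderiv ℝ f y (EuclideanSpace.single i 1)) x (EuclideanSpace.single i 1)

/-- `f` is harmonic on a set: twice continuously differentiable with vanishing Laplacian. -/
def IsHarmonicOnSet (d : ℕ) (f : EuclideanSpace ℝ (Fin d) → ℝ)
    (s : Set (EuclideanSpace ℝ (Fin d))) : Prop :=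
  ContDiffOn ℝ 2 f s ∧ ∀ x ∈ s, lapl d f x = 0

/-- Super-mean-value property w.r.t. averages over balls
(encodes `Δf ≤ 0` for continuous `f`). -/
def SuperMeanVal (d : ℕ) (f : EuclideanSpace ℝ (Fin d) → ℝ) : Prop :=
  ∀ (x : EuclideanSpace ℝ (Fin d)) (r : ℝ), 0 < r → (⨍ y in Metric.ball x r, f y) ≤ f x

/-- The contact set `Λ_φ(u) = {(x',0) : u(x',0) = φ(x')}`. -/
def contactSet (n : ℕ) (φ : EuclideanSpace ℝ (Fin n) → ℝ)
    (u : EuclideanSpace ℝ (Fin (n + 1)) → ℝ) : Set (EuclideanSpace ℝ (Fin (n + 1))) :=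
  {x | x (Fin.last n) = 0 ∧ u x = φ (thinProj n x)}

/-- Global solution to the thin obstacle problem in `ℝ^{n+1}` with thin obstacle `φ`:
continuous, even in the last variable, above the obstacle on the thin space,
harmonic outside the contact set, and superharmonic (mean value inequality). -/
def IsGlobalSolution (n : ℕ) (φ : EuclideanSpace ℝ (Fin n) → ℝ)
    (u : EuclideanSpace ℝ (Fin (n + 1)) → ℝ) : Prop :=
  Continuous u ∧
  (∀ x' t, u (thinEmbed n x' t) = u (thinEmbed n x' (-t))) ∧
  (∀ x', φ x' ≤ u (thinEmbed n x' 0)) ∧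
  IsHarmonicOnSet (n + 1) u (contactSet n φ u)ᶜ ∧
  SuperMeanVal (n + 1) u

/-- Evaluation of a real polynomial at a point of `ℝ^d`. -/
def pev {d : ℕ} (q : MvPolynomial (Fin d) ℝ) (x : EuclideanSpace ℝ (Fin d)) : ℝ :=
  MvPolynomial.eval (fun i => x i) q

/-- Polynomial growth (of some order). -/
def HasPolyGrowth (d : ℕ) (u : EuclideanSpace ℝ (Fin d) → ℝ) : Prop :=
  ∃ (m : ℕ) (C : ℝ), ∀ x, |u x| ≤ C * (1 + ‖x‖ ^ m)

/-- Polynomial growth of order exactly `m` (and `m` is the smallest such order). -/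
def PolyGrowthOrder (d : ℕ) (u : EuclideanSpace ℝ (Fin d) → ℝ) (m : ℕ) : Prop :=
  (∃ C : ℝ, ∀ x, |u x| ≤ C * (1 + ‖x‖ ^ m)) ∧
  ∀ m' : ℕ, (∃ C : ℝ, ∀ x, |u x| ≤ C * (1 + ‖x‖ ^ m')) → m ≤ m'

/-- The class `𝒫ᵒ_{n+1}`: polynomials `q` even in the last variable such that
`x_{n+1} q(x)` is harmonic and `closure {q(·,0) < 0}` is compact. -/
def MemPo (n : ℕ) (q : MvPolynomial (Fin (n + 1)) ℝ) : Prop :=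
  (∀ x' t, pev q (thinEmbed n x' t) = pev q (thinEmbed n x' (-t))) ∧
  IsHarmonicOnSet (n + 1) (fun x => x (Fin.last n) * pev q x) Set.univ ∧
  IsCompact (closure {x' : EuclideanSpace ℝ (Fin n) | pev q (thinEmbed n x' 0) < 0})

/-- The class `𝒫ᵉ_{n+1}`: harmonic polynomials `p` even in the last variable such that
`closure {p(·,0) < 0}` is compact. -/
def MemPe (n : ℕ) (p : MvPolynomial (Fin (n + 1)) ℝ) : Prop :=
  (∀ x' t, pev p (thinEmbed n x' t) = pev p (thinEmbed n x' (-t))) ∧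
  IsHarmonicOnSet (n + 1) (pev p) Set.univ ∧
  IsCompact (closure {x' : EuclideanSpace ℝ (Fin n) | pev p (thinEmbed n x' 0) < 0})

/-- `f(x) → 0` as `|x| → ∞`. -/
def VanishAtInfty (d : ℕ) (f : EuclideanSpace ℝ (Fin d) → ℝ) : Prop :=
  ∀ ε > 0, ∃ R : ℝ, ∀ x, R ≤ ‖x‖ → |f x| < ε

/-- The embedding of a subset of `ℝ^n` into the thin space of `ℝ^{n+1}`. -/
def thinSet (n : ℕ) (S : Set (EuclideanSpace ℝ (Fin n))) :
    Set (EuclideanSpace ℝ (Fin (n + 1))) :=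
  (fun x' => thinEmbed n x' 0) '' S

/-- The free boundary `Γ(u)`: the boundary in `ℝ^n` of the positivity set, embedded. -/
def freeBoundary (n : ℕ) (u : EuclideanSpace ℝ (Fin (n + 1)) → ℝ) :
    Set (EuclideanSpace ℝ (Fin (n + 1))) :=
  thinSet n (frontier {x' : EuclideanSpace ℝ (Fin n) | 0 < u (thinEmbed n x' 0)})

/-- Negating the `i`-th coordinate of a point of `ℝ^d`. -/
def negCoordAt (d : ℕ) (i : Fin d) (x : EuclideanSpace ℝ (Fin d)) :
    EuclideanSpace ℝ (Fin d) :=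
  (EuclideanSpace.equiv (Fin d) ℝ).symm (Function.update (fun j => x j) i (-(x i)))

/-- The constant `ρ̄(k, n)`, where `κ = k/(n-1)`. -/
def rhoBar (k n : ℕ) : ℝ :=
  ((k : ℝ) / ((n : ℝ) - 1)) ^ (-(1 : ℝ) / (((n : ℝ) - 1) * ((k : ℝ) / ((n : ℝ) - 1) + 1))) *
    (((k : ℝ) / ((n : ℝ) - 1)) ^
        (-((k : ℝ) / ((n : ℝ) - 1)) / ((k : ℝ) / ((n : ℝ) - 1) + 1)) +
      ((k : ℝ) / ((n : ℝ) - 1)) ^ ((1 : ℝ) / ((k : ℝ) / ((n : ℝ) - 1) + 1))) ^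
      (-(1 : ℝ) / (((n : ℝ) - 1) * ((k : ℝ) / ((n : ℝ) - 1))))

/-- The barrier function `g_{A,t}(r) = A r^{1-n} + t - 1 + r^k`. -/
def gfun (n k : ℕ) (A t r : ℝ) : ℝ :=
  A * r ^ ((1 : ℝ) - (n : ℝ)) + t - 1 + r ^ k

/-!
Argue by contradiction. If `v₁ > v₂` somewhere, then, since `v₂ - v₁` is asymptotically
nonnegative, subtracting a small multiple `ε ‖x‖²` makes `w = v₂ - v₁ - ε ‖x‖²` attain a local
minimum at a point `y` with `v₂ y < v₁ y`. Near `y` we have `v₁ > v₂ ≥ φ`, so `y` lies off the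
contact set and `v₁` is harmonic near `y`. Average over small balls `B_r(y)`: the average of `v₂`
is at most `v₂ y`; by the second-order Taylor expansion the average of `v₁` is at least
`v₁ y - o(r²)`, because the Hessian integrates over a ball to a multiple of `Δv₁ y = 0`; and the
average of `‖x‖²` is `‖y‖² + (n+1)/(n+3) r²`. So the average of `w` falls strictly below `w y`,
contradicting minimality.
-/

open Topology Asymptotics

theorem thinEmbed_thinProj {n : ℕ} {x : EuclideanSpace ℝ (Fin (n + 1))}
    (hx : x (Fin.last n) = 0) : thinEmbed n (thinProj n x) 0 = x := by
  ext j
  show (Fin.snoc (fun i => thinProj n x i) (0 : ℝ) : Fin (n + 1) → ℝ) j = x j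
  refine Fin.lastCases ?_ (fun i => ?_) j
  · rw [Fin.snoc_last, hx]
  · rw [Fin.snoc_castSucc]
    rfl

theorem integrableOn_ball_of_continuousOn {X : Type*} [MetricSpace X] [ProperSpace X]
    [MeasurableSpace X] [OpensMeasurableSpace X] {μ : Measure X} [IsFiniteMeasureOnCompacts μ]
    {f : X → ℝ} {y : X} {r : ℝ} (hf : ContinuousOn f (closedBall y r)) :
    IntegrableOn f (ball y r) μ :=
  (hf.integrableOn_compact (isCompact_closedBall y r)).mono_set ball_subset_closedBall

theorem setAverage_mono_on {X : Type*} [MeasurableSpace X] {μ : Measure X} {s : Set X}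
    {f g : X → ℝ} (hf : IntegrableOn f s μ) (hg : IntegrableOn g s μ) (hs : MeasurableSet s)
    (h : ∀ x ∈ s, f x ≤ g x) : ⨍ x in s, f x ∂μ ≤ ⨍ x in s, g x ∂μ := by
  simp only [setAverage_eq, smul_eq_mul]
  exact mul_le_mul_of_nonneg_left (setIntegral_mono_on hf hg hs h) (by positivity)

theorem setAverage_ball_eq_setAverage_ball_zero {E : Type*} [NormedAddCommGroup E]
    [MeasurableSpace E] [BorelSpace E] (μ : Measure E) [μ.IsAddLeftInvariant]
    (g : E → ℝ) (y : E) (r : ℝ) :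
    ⨍ x in ball y r, g x ∂μ = ⨍ z in ball 0 r, g (y + z) ∂μ := by
  have hpre : (y + ·) ⁻¹' ball y r = ball (0 : E) r := by
    ext z; simp
  rw [setAverage_eq, setAverage_eq, ← hpre,
    (measurePreserving_add_left μ y).setIntegral_preimage_emb (measurableEmbedding_addLeft y),
    measureReal_def, measureReal_def, measure_preimage_add]

theorem setAverage_ball_zero_norm_sq {E : Type*} [NormedAddCommGroup E] [NormedSpace ℝ E]
    [Nontrivial E] [FiniteDimensional ℝ E] [MeasurableSpace E] [BorelSpace E] (μ : Measure E)
    [μ.IsAddHaarMeasure] {r : ℝ} (hr : 0 < r) :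
    ⨍ x in ball (0 : E) r, ‖x‖ ^ 2 ∂μ =
      Module.finrank ℝ E / (Module.finrank ℝ E + 2) * r ^ 2 := by
  obtain ⟨k, hk⟩ : ∃ k, Module.finrank ℝ E = k + 1 :=
    Nat.exists_eq_add_one.2 Module.finrank_pos
  have hradial : ∫ t in Ioi (0 : ℝ), t ^ k • (Iio r).indicator (· ^ 2) t =
      r ^ (k + 3) / (k + 3) := by
    rw [← integral_indicator measurableSet_Ioi]
    have : (Ioi 0).indicator (fun t : ℝ => t ^ k • (Iio r).indicator (· ^ 2) t) =
        (Ioo 0 r).indicator (· ^ (k + 2)) := by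
      ext t
      by_cases h0 : 0 < t <;> by_cases h1 : t < r <;> simp [indicator, h0, h1]
      ring
    rw [this, integral_indicator measurableSet_Ioo, ← integral_Ioc_eq_integral_Ioo,
      ← intervalIntegral.integral_of_le hr.le, integral_pow]
    push_cast; ring
  have hball : ∫ x in ball (0 : E) r, ‖x‖ ^ 2 ∂μ = ∫ x, (Iio r).indicator (· ^ 2) ‖x‖ ∂μ := by
    rw [← integral_indicator measurableSet_ball]
    congr 1 with x
    simp [indicator]
  have hunit : 0 < μ.real (ball (0 : E) 1) :=
    ENNReal.toReal_pos (measure_ball_pos μ 0 one_pos).ne' measure_ball_lt_top.ne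
  rw [setAverage_eq, hball, integral_fun_norm_addHaar, hk, Nat.add_sub_cancel, hradial,
    ← Measure.addHaar_real_closedBall_eq_addHaar_real_ball,
    Measure.addHaar_real_closedBall μ 0 hr.le, hk, smul_eq_mul, nsmul_eq_mul, smul_eq_mul]
  field_simp
  push_cast
  ring

section Symmetry

variable {E : Type*} [NormedAddCommGroup E] [InnerProductSpace ℝ E] [FiniteDimensional ℝ E]
  [MeasurableSpace E] [BorelSpace E]

theorem setIntegral_ball_zero_comp_linearIsometryEquiv (e : E ≃ₗᵢ[ℝ] E) (g : E → ℝ) (r : ℝ) :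
    ∫ z in ball 0 r, g (e z) = ∫ z in ball 0 r, g z := by
  conv_rhs => rw [← map_zero e, ← e.image_ball]
  exact (e.measurePreserving.setIntegral_image_emb e.toHomeomorph.measurableEmbedding _ _).symm

theorem setIntegral_ball_zero_eq_zero_of_odd {g : E → ℝ} (hg : ∀ z, g (-z) = -g z) (r : ℝ) :
    ∫ z in ball (0 : E) r, g z = 0 := by
  have := setIntegral_ball_zero_comp_linearIsometryEquiv (.neg ℝ) g r
  simp only [LinearIsometryEquiv.coe_neg, hg, integral_neg] at this
  linarith

theorem setAverage_ball_norm_sq [Nontrivial E] (y : E) {r : ℝ} (hr : 0 < r) :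
    ⨍ x in ball y r, ‖x‖ ^ 2 =
      ‖y‖ ^ 2 + Module.finrank ℝ E / (Module.finrank ℝ E + 2) * r ^ 2 := by
  have hV : volume.real (ball (0 : E) r) ≠ 0 :=
    (ENNReal.toReal_pos (measure_ball_pos volume 0 hr).ne' measure_ball_lt_top.ne).ne'
  have hcross : ∫ z in ball (0 : E) r, 2 * inner ℝ y z = 0 :=
    setIntegral_ball_zero_eq_zero_of_odd (fun z => by rw [inner_neg_right, mul_neg]) r
  have hsplit : ∫ z in ball (0 : E) r, ‖y + z‖ ^ 2 = volume.real (ball (0 : E) r) * ‖y‖ ^ 2 +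
      ∫ z in ball (0 : E) r, ‖z‖ ^ 2 := by
    have hlin : IntegrableOn (fun z : E => 2 * inner ℝ y z) (ball 0 r) :=
      integrableOn_ball_of_continuousOn (by fun_prop)
    have hsq : IntegrableOn (fun z : E => ‖z‖ ^ 2) (ball 0 r) :=
      integrableOn_ball_of_continuousOn (by fun_prop)
    have hconst : IntegrableOn (fun _ : E => ‖y‖ ^ 2) (ball 0 r) := integrableOn_const
    simp_rw [norm_add_sq_real, add_assoc]
    rw [integral_add hconst (hlin.fun_add hsq), integral_add hlin hsq, hcross, setIntegral_const,
      smul_eq_mul, zero_add]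
  rw [setAverage_ball_eq_setAverage_ball_zero, ← setAverage_ball_zero_norm_sq volume hr,
    setAverage_eq, setAverage_eq, hsplit, smul_eq_mul, smul_eq_mul, mul_add, ← mul_assoc,
    inv_mul_cancel₀ hV, one_mul]

end Symmetry

section Coordinates

variable {ι : Type*} [Fintype ι] [DecidableEq ι]

theorem setIntegral_ball_zero_coord_mul_coord {i j : ι} (hij : i ≠ j) (r : ℝ) :
    ∫ z in ball (0 : EuclideanSpace ℝ ι) r, z i * z j = 0 := by
  let e : EuclideanSpace ℝ ι ≃ₗᵢ[ℝ] EuclideanSpace ℝ ι := .piLpCongrRight 2 fun k =>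
    if k = i then .neg ℝ else .refl ℝ ℝ
  have := setIntegral_ball_zero_comp_linearIsometryEquiv e (fun z => z i * z j) r
  simp [e, LinearIsometryEquiv.piLpCongrRight_apply, hij.symm, integral_neg] at this
  linarith

theorem setIntegral_ball_zero_coord_sq_eq (i j : ι) (r : ℝ) :
    ∫ z in ball (0 : EuclideanSpace ℝ ι) r, z i ^ 2 =
      ∫ z in ball (0 : EuclideanSpace ℝ ι) r, z j ^ 2 := by
  have := setIntegral_ball_zero_comp_linearIsometryEquiv
    (LinearIsometryEquiv.piLpCongrLeft 2 ℝ ℝ (Equiv.swap i j)) (fun z => z i ^ 2) r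
  simpa [LinearIsometryEquiv.piLpCongrLeft_apply, Equiv.piCongrLeft'_apply] using this.symm

theorem apply_self_eq_sum_coord_mul_coord
    (B : EuclideanSpace ℝ ι →L[ℝ] EuclideanSpace ℝ ι →L[ℝ] ℝ) (z : EuclideanSpace ℝ ι) :
    B z z = ∑ i, ∑ j, z i * z j * B (EuclideanSpace.single i 1) (EuclideanSpace.single j 1) := by
  conv_lhs => rw [← (EuclideanSpace.basisFun ι ℝ).sum_repr z]
  simp only [map_sum, map_smul, FunLike.coe_sum, Finset.sum_apply, FunLike.coe_smul,
    Pi.smul_apply, smul_eq_mul, EuclideanSpace.basisFun_repr, EuclideanSpace.basisFun_apply,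
    Finset.mul_sum]
  rw [Finset.sum_comm]
  exact Finset.sum_congr rfl fun i _ => Finset.sum_congr rfl fun j _ => by ring

theorem card_mul_setIntegral_ball_zero_apply_self
    (B : EuclideanSpace ℝ ι →L[ℝ] EuclideanSpace ℝ ι →L[ℝ] ℝ) (r : ℝ) :
    Fintype.card ι * ∫ z in ball (0 : EuclideanSpace ℝ ι) r, B z z =
      (∑ i, B (EuclideanSpace.single i 1) (EuclideanSpace.single i 1)) *
        ∫ z in ball (0 : EuclideanSpace ℝ ι) r, ‖z‖ ^ 2 := by
  have hint : ∀ i j : ι, IntegrableOn (fun z : EuclideanSpace ℝ ι => z i * z j) (ball 0 r) :=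
    fun i j => integrableOn_ball_of_continuousOn (by fun_prop)
  have hdiag : ∫ z in ball (0 : EuclideanSpace ℝ ι) r, B z z =
      ∑ i, (∫ z in ball (0 : EuclideanSpace ℝ ι) r, z i ^ 2) *
        B (EuclideanSpace.single i 1) (EuclideanSpace.single i 1) := by
    simp_rw [apply_self_eq_sum_coord_mul_coord B]
    rw [integral_finsetSum _ fun i _ => integrable_finsetSum _ fun j _ => (hint i j).mul_const _]
    refine Finset.sum_congr rfl fun i _ => ?_
    rw [integral_finsetSum _ fun j _ => (hint i j).mul_const _, Finset.sum_eq_single i]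
    · simp [integral_mul_const, sq]
    · intro j _ hji
      rw [integral_mul_const, setIntegral_ball_zero_coord_mul_coord hji.symm, zero_mul]
    · simp
  have hnorm : ∀ i, ∫ z in ball (0 : EuclideanSpace ℝ ι) r, ‖z‖ ^ 2 =
      Fintype.card ι * ∫ z in ball (0 : EuclideanSpace ℝ ι) r, z i ^ 2 := by
    intro i
    simp_rw [EuclideanSpace.real_norm_sq_eq]
    rw [integral_finsetSum _ fun j _ => integrableOn_ball_of_continuousOn (by fun_prop)]
    simp [setIntegral_ball_zero_coord_sq_eq _ i]
  rw [hdiag, Finset.mul_sum, Finset.sum_mul]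
  refine Finset.sum_congr rfl fun i _ => ?_
  rw [hnorm i]
  ring

end Coordinates

section Taylor

variable {E : Type*} [NormedAddCommGroup E] [NormedSpace ℝ E]

theorem abs_taylor_two_remainder_le {f : E → ℝ} {y z : E} {B : E →L[ℝ] E →L[ℝ] ℝ} {η : ℝ}
    (hdiff : ∀ t ∈ Icc (0 : ℝ) 1, DifferentiableAt ℝ f (y + t • z))
    (hB : ∀ t ∈ Icc (0 : ℝ) 1, ‖fderiv ℝ f (y + t • z) - fderiv ℝ f y - B (t • z)‖ ≤ η * ‖z‖) :
    |f (y + z) - f y - fderiv ℝ f y z - B z z / 2| ≤ η * ‖z‖ ^ 2 := by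
  set D := fderiv ℝ f y
  set φ : ℝ → ℝ := fun t => f (y + t • z) - t * D z - t ^ 2 / 2 * B z z
  have hφ : ∀ t ∈ Icc (0 : ℝ) 1,
      HasDerivAt φ ((fderiv ℝ f (y + t • z) - D - B (t • z)) z) t := by
    intro t ht
    have hline : HasDerivAt (fun s : ℝ => y + s • z) z t := by
      simpa using ((hasDerivAt_id t).smul_const z).const_add y
    refine ((((hdiff t ht).hasFDerivAt.comp_hasDerivAt t hline).sub
      ((hasDerivAt_id t).mul_const (D z))).sub
      (((hasDerivAt_pow 2 t).div_const 2).mul_const (B z z))).congr_deriv ?_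
    simp only [sub_apply, B.map_smul, smul_apply, smul_eq_mul]
    ring
  have hbound : ∀ t ∈ Ico (0 : ℝ) 1,
      ‖(fderiv ℝ f (y + t • z) - D - B (t • z)) z‖ ≤ η * ‖z‖ ^ 2 := fun t ht =>
    calc ‖(fderiv ℝ f (y + t • z) - D - B (t • z)) z‖
        ≤ ‖fderiv ℝ f (y + t • z) - D - B (t • z)‖ * ‖z‖ := ContinuousLinearMap.le_opNorm _ _
      _ ≤ η * ‖z‖ * ‖z‖ := by gcongr; exact hB t (Ico_subset_Icc_self ht)
      _ = η * ‖z‖ ^ 2 := by ring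
  have hφ01 : φ 1 - φ 0 = f (y + z) - f y - D z - B z z / 2 := by
    show (f (y + (1 : ℝ) • z) - 1 * D z - 1 ^ 2 / 2 * B z z) -
      (f (y + (0 : ℝ) • z) - 0 * D z - 0 ^ 2 / 2 * B z z) = _
    simp only [one_smul, zero_smul, add_zero]
    ring
  have := norm_image_sub_le_of_norm_deriv_le_segment_01'
    (fun t ht => (hφ t ht).hasDerivWithinAt) hbound
  rwa [hφ01, Real.norm_eq_abs] at this

theorem ContDiffAt.isLittleO_taylor_two {f : E → ℝ} {y : E} (hf : ContDiffAt ℝ 2 f y) :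
    (fun z => f (y + z) - f y - fderiv ℝ f y z - fderiv ℝ (fderiv ℝ f) y z z / 2) =o[𝓝 0]
      fun z => ‖z‖ ^ 2 := by
  have hB : HasFDerivAt (fderiv ℝ f) (fderiv ℝ (fderiv ℝ f) y) y :=
    ((hf.fderiv_right (m := 1) le_rfl).differentiableAt one_ne_zero).hasFDerivAt
  have hdiff : ∀ᶠ z in 𝓝 (0 : E), DifferentiableAt ℝ f (y + z) := by
    have : Tendsto (y + ·) (𝓝 (0 : E)) (𝓝 y) := by
      simpa using (continuous_const_add y).tendsto (0 : E)
    exact this.eventually ((hf.eventually (by simp)).mono fun x hx =>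
      hx.differentiableAt (by norm_num))
  refine isLittleO_iff.2 fun η hη => ?_
  obtain ⟨δ, hδ, hball⟩ := eventually_nhds_iff_ball.1
    ((hasFDerivAt_iff_isLittleO_nhds_zero.1 hB).def hη |>.and hdiff)
  filter_upwards [ball_mem_nhds (0 : E) hδ] with z hz
  have hseg : ∀ t ∈ Icc (0 : ℝ) 1, t • z ∈ ball (0 : E) δ ∧ ‖t • z‖ ≤ ‖z‖ := fun t ht =>
    ⟨(convex_ball (0 : E) δ).smul_mem_of_zero_mem (mem_ball_self hδ) hz ht, by
      rw [norm_smul, Real.norm_of_nonneg ht.1]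
      exact mul_le_of_le_one_left (norm_nonneg z) ht.2⟩
  rw [Real.norm_eq_abs, norm_pow, norm_norm]
  refine abs_taylor_two_remainder_le (fun t ht => (hball _ (hseg t ht).1).2) fun t ht => ?_
  exact (hball _ (hseg t ht).1).1.trans (by gcongr; exact (hseg t ht).2)

end Taylor

theorem lapl_eq_sum_apply_single {d : ℕ} {f : EuclideanSpace ℝ (Fin d) → ℝ}
    {y : EuclideanSpace ℝ (Fin d)}
    {B : EuclideanSpace ℝ (Fin d) →L[ℝ] EuclideanSpace ℝ (Fin d) →L[ℝ] ℝ}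
    (hB : HasFDerivAt (fderiv ℝ f) B y) :
    lapl d f y = ∑ i, B (EuclideanSpace.single i 1) (EuclideanSpace.single i 1) :=
  Finset.sum_congr rfl fun i _ => by
    have h : HasFDerivAt (fun x => fderiv ℝ f x (EuclideanSpace.single i (1 : ℝ)))
        ((ContinuousLinearMap.apply ℝ ℝ (EuclideanSpace.single i (1 : ℝ))).comp B) y :=
      (ContinuousLinearMap.apply ℝ ℝ (EuclideanSpace.single i (1 : ℝ))).hasFDerivAt.comp y hB
    rw [h.fderiv]
    rfl

theorem eventually_sub_mul_sq_le_setAverage_ball {d : ℕ} [NeZero d]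
    {f : EuclideanSpace ℝ (Fin d) → ℝ} {y : EuclideanSpace ℝ (Fin d)} (hf : ContDiffAt ℝ 2 f y)
    (hlap : lapl d f y = 0) {η : ℝ} (hη : 0 < η) :
    ∀ᶠ r in 𝓝[>] 0, f y - η * r ^ 2 ≤ ⨍ x in ball y r, f x := by
  set D := fderiv ℝ f y
  set B := fderiv ℝ (fderiv ℝ f) y
  have hB : HasFDerivAt (fderiv ℝ f) B y :=
    ((hf.fderiv_right (m := 1) le_rfl).differentiableAt one_ne_zero).hasFDerivAt
  have hquad : ∀ r, ∫ z in ball (0 : EuclideanSpace ℝ (Fin d)) r, (D z + B z z / 2) = 0 := by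
    intro r
    have htrace := card_mul_setIntegral_ball_zero_apply_self B r
    rw [← lapl_eq_sum_apply_single hB, hlap, zero_mul, Fintype.card_fin,
      mul_eq_zero, or_iff_right (NeZero.ne _)] at htrace
    rw [integral_add (integrableOn_ball_of_continuousOn (by fun_prop))
        (integrableOn_ball_of_continuousOn (by fun_prop)),
      setIntegral_ball_zero_eq_zero_of_odd (fun z => map_neg D z) r, integral_div, htrace]
    simp
  have hnear : ∀ᶠ z in 𝓝 (0 : EuclideanSpace ℝ (Fin d)), ContinuousAt f (y + z) ∧
      |f (y + z) - f y - D z - B z z / 2| ≤ η * ‖z‖ ^ 2 := by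
    have hy : Tendsto (y + ·) (𝓝 (0 : EuclideanSpace ℝ (Fin d))) (𝓝 y) := by
      simpa using (continuous_const_add y).tendsto 0
    refine (hy.eventually ((hf.eventually (by simp)).mono fun x hx => hx.continuousAt)).and ?_
    simpa only [Real.norm_eq_abs, abs_norm, abs_pow] using hf.isLittleO_taylor_two.def hη
  filter_upwards [self_mem_nhdsWithin,
    nhdsWithin_le_nhds (eventually_closedBall_subset hnear)] with r (hr : 0 < r) hball
  have hV : volume.real (ball (0 : EuclideanSpace ℝ (Fin d)) r) ≠ 0 :=
    (ENNReal.toReal_pos (measure_ball_pos volume 0 hr).ne' measure_ball_lt_top.ne).ne'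
  have hquadint : IntegrableOn (fun z : EuclideanSpace ℝ (Fin d) => D z + B z z / 2) (ball 0 r) :=
    integrableOn_ball_of_continuousOn (by fun_prop)
  have hconst : IntegrableOn (fun _ : EuclideanSpace ℝ (Fin d) => f y - η * r ^ 2) (ball 0 r) :=
    integrableOn_const
  have hfint : IntegrableOn (fun z => f (y + z)) (ball 0 r) :=
    integrableOn_ball_of_continuousOn fun z hz =>
      ((hball hz).1.comp (continuous_const_add y).continuousAt).continuousWithinAt
  have hlow : ∀ z ∈ ball (0 : EuclideanSpace ℝ (Fin d)) r,
      f y - η * r ^ 2 + (D z + B z z / 2) ≤ f (y + z) := by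
    intro z hz
    have hzr : ‖z‖ ≤ r := (mem_ball_zero_iff.1 hz).le
    have := (abs_le.1 (hball (ball_subset_closedBall hz)).2).1
    have : η * ‖z‖ ^ 2 ≤ η * r ^ 2 := by gcongr
    linarith
  rw [setAverage_ball_eq_setAverage_ball_zero]
  calc f y - η * r ^ 2 = ⨍ z in ball (0 : EuclideanSpace ℝ (Fin d)) r,
      (f y - η * r ^ 2 + (D z + B z z / 2)) := by
        rw [setAverage_eq, integral_add hconst hquadint, hquad, add_zero, setIntegral_const,
          smul_smul, inv_mul_cancel₀ hV, one_smul]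
    _ ≤ ⨍ z in ball 0 r, f (y + z) :=
        setAverage_mono_on (hconst.add hquadint) hfint measurableSet_ball hlow

theorem not_isLocalMin_sub_sub_mul_norm_sq {d : ℕ} [NeZero d]
    {g f : EuclideanSpace ℝ (Fin d) → ℝ} {y : EuclideanSpace ℝ (Fin d)} (hg : Continuous g)
    (hsuper : ∀ r > 0, ⨍ x in ball y r, g x ≤ g y) (hf : ContDiffAt ℝ 2 f y)
    (hlap : lapl d f y = 0) {ε : ℝ} (hε : 0 < ε) :
    ¬IsLocalMin (fun x => g x - f x - ε * ‖x‖ ^ 2) y := by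
  intro hmin
  have hd : (0 : ℝ) < d := by exact_mod_cast NeZero.pos d
  have hη : 0 < ε * (d / (d + 2)) / 2 := div_pos (mul_pos hε (div_pos hd (by linarith))) two_pos
  have hnear : ∀ᶠ x in 𝓝 y,
      g y - f y - ε * ‖y‖ ^ 2 ≤ g x - f x - ε * ‖x‖ ^ 2 ∧ ContinuousAt f x :=
    hmin.and ((hf.eventually (by simp)).mono fun x hx => hx.continuousAt)
  obtain ⟨r, hr, hball, hfr⟩ := (eventually_mem_nhdsWithin.and
    (((eventually_closedBall_subset hnear).filter_mono nhdsWithin_le_nhds).and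
      (eventually_sub_mul_sq_le_setAverage_ball hf hlap hη))).exists
  have hgint : IntegrableOn g (ball y r) := integrableOn_ball_of_continuousOn hg.continuousOn
  have hfint : IntegrableOn f (ball y r) :=
    integrableOn_ball_of_continuousOn fun x hx => (hball hx).2.continuousWithinAt
  have hsqint : IntegrableOn (fun x => ‖x‖ ^ 2) (ball y r) :=
    integrableOn_ball_of_continuousOn (by fun_prop)
  have hhint : IntegrableOn (fun x => g x - f x - ε * ‖x‖ ^ 2) (ball y r) :=
    (hgint.sub' hfint).sub' (hsqint.const_mul ε)
  have hsplit : ⨍ x in ball y r, (g x - f x - ε * ‖x‖ ^ 2) =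
      (⨍ x in ball y r, g x) - (⨍ x in ball y r, f x) - ε * ⨍ x in ball y r, ‖x‖ ^ 2 := by
    simp only [setAverage_eq, smul_eq_mul]
    rw [integral_sub (hgint.sub' hfint) (hsqint.const_mul ε), integral_sub hgint hfint,
      integral_const_mul]
    ring
  have hmean := setAverage_mono_on integrableOn_const hhint measurableSet_ball
    fun x hx => (hball (ball_subset_closedBall hx)).1
  rw [setAverage_const (measure_ball_pos volume y hr).ne' measure_ball_lt_top.ne, hsplit,
    setAverage_ball_norm_sq y hr, finrank_euclideanSpace_fin] at hmean
  linarith [hsuper r hr, mul_pos hη (pow_pos hr 2)]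

theorem exists_isLocalMin_sub_mul_norm_sq {E : Type*} [NormedAddCommGroup E] [ProperSpace E]
    {w : E → ℝ} (hw : Continuous w) (hinf : ∀ ε > 0, ∃ R : ℝ, ∀ x, R ≤ ‖x‖ → -ε ≤ w x)
    {x₀ : E} (hx₀ : w x₀ < 0) :
    ∃ ε > 0, ∃ y, w y < 0 ∧ IsLocalMin (fun x => w x - ε * ‖x‖ ^ 2) y := by
  set δ := -w x₀
  have hδ : 0 < δ := neg_pos.2 hx₀
  obtain ⟨R₀, hR₀⟩ := hinf (δ / 2) (half_pos hδ)
  set R := max R₀ (‖x₀‖ + 1)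
  have hx₀R : ‖x₀‖ < R := (lt_add_one _).trans_le (le_max_right _ _)
  have hR : 0 < R := (norm_nonneg x₀).trans_lt hx₀R
  -- `ε R² = δ / 4`: on `closedBall 0 R` the perturbation costs at most `δ / 4`, too little to
  -- move the minimum (at most `-δ`) to the sphere, where `w ≥ -δ / 2`.
  set ε := δ / (4 * R ^ 2)
  have hε : 0 < ε := by positivity
  have hεR : ε * R ^ 2 = δ / 4 := by simp only [ε]; field_simp
  obtain ⟨y, hyR, hymin⟩ := (isCompact_closedBall (0 : E) R).exists_isMinOn
    ⟨x₀, mem_closedBall_zero_iff.2 hx₀R.le⟩ (by fun_prop : Continuous fun x =>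
      w x - ε * ‖x‖ ^ 2).continuousOn
  have hyR : ‖y‖ ≤ R := mem_closedBall_zero_iff.1 hyR
  have hy : w y - ε * ‖y‖ ^ 2 ≤ -δ :=
    (hymin (mem_closedBall_zero_iff.2 hx₀R.le)).trans
      (by simp only [δ, neg_neg]; exact sub_le_self _ (by positivity))
  have hεy : ε * ‖y‖ ^ 2 ≤ δ / 4 := hεR ▸ by gcongr
  have hyR' : ‖y‖ < R := by
    refine hyR.lt_of_ne fun hyR' => ?_
    linarith [hR₀ y (hyR' ▸ le_max_left _ _)]
  exact ⟨ε, hε, y, by linarith,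
    hymin.isLocalMin (closedBall_mem_nhds_of_mem (mem_ball_zero_iff.2 hyR'))⟩

theorem statement2_general (n : ℕ)
    (φ : EuclideanSpace ℝ (Fin n) → ℝ)
    (v₁ v₂ : EuclideanSpace ℝ (Fin (n + 1)) → ℝ)
    (h1 : IsGlobalSolution n φ v₁)
    (h2cont : Continuous v₂)
    (h2obst : ∀ x', φ x' ≤ v₂ (thinEmbed n x' 0))
    (h2super : SuperMeanVal (n + 1) v₂)
    (hliminf : ∀ ε > 0, ∃ R : ℝ, ∀ x : EuclideanSpace ℝ (Fin (n + 1)),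
      R ≤ ‖x‖ → -ε ≤ v₂ x - v₁ x) :
    ∀ x, v₁ x ≤ v₂ x := by
  obtain ⟨hv₁, -, -, ⟨hv₁C2, hv₁lapl⟩, -⟩ := h1
  intro x₀
  by_contra! hx₀
  obtain ⟨ε, hε, y, hy, hmin⟩ :=
    exists_isLocalMin_sub_mul_norm_sq (w := fun x => v₂ x - v₁ x) (h2cont.sub hv₁) hliminf
      (sub_neg.2 hx₀)
  have hnoncontact : {x | v₂ x < v₁ x} ⊆ (contactSet n φ v₁)ᶜ := by
    rintro x (hx : v₂ x < v₁ x) ⟨hlast, hcontact⟩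
    have := h2obst (thinProj n x)
    rw [thinEmbed_thinProj hlast] at this
    linarith
  have hU : {x | v₂ x < v₁ x} ∈ 𝓝 y := (isOpen_lt h2cont hv₁).mem_nhds (sub_neg.1 hy)
  exact not_isLocalMin_sub_sub_mul_norm_sq h2cont (h2super y)
    (hv₁C2.contDiffAt (mem_of_superset hU hnoncontact))
    (hv₁lapl y (hnoncontact (mem_of_mem_nhds hU))) hε hmin

/-- comparison principle for global solutions of the thin obstacle
problem: a supersolution above the obstacle lying asymptotically above a solution
at infinity dominates it everywhere. -/
theorem statement2 (n : ℕ) (hn : 1 ≤ n)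
    (φ : EuclideanSpace ℝ (Fin n) → ℝ) (hφ : Continuous φ)
    (v₁ v₂ : EuclideanSpace ℝ (Fin (n + 1)) → ℝ)
    (h1 : IsGlobalSolution n φ v₁)
    (h2cont : Continuous v₂)
    (h2even : ∀ x' t, v₂ (thinEmbed n x' t) = v₂ (thinEmbed n x' (-t)))
    (h2obst : ∀ x', φ x' ≤ v₂ (thinEmbed n x' 0))
    (h2super : SuperMeanVal (n + 1) v₂)
    (hliminf : ∀ ε > 0, ∃ R : ℝ, ∀ x : EuclideanSpace ℝ (Fin (n + 1)),
      R ≤ ‖x‖ → -ε ≤ v₂ x - v₁ x) :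
    ∀ x, v₁ x ≤ v₂ x :=
  statement2_general n φ v₁ v₂ h1 h2cont h2obst h2super hliminf

end
end

section
/- Let n ≥ 1 and let g be a continuous real-valued function on the closed unit ball of ℝ^n with g > 0 on the unit sphere, and suppose {g ≤ 0} := {x in the closed unit ball : g(x) ≤ 0} is nonempty. Then for every ε > 0 there exists η̄ > 0 such that for every η* ∈ (0, η̄], the Hausdorff distance between {g ≤ 0} and {x in the closed unit ball : g(x) ≤ η*} is at most ε. -/
open MeasureTheory Metric Set Filter

noncomputable section

/-! On the compact set of points of `K` at distance at least `ε` from `{g ≤ 0}`, the continuous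
function `g` is positive, hence bounded below by some `η̄ > 0`. So every point of `{g ≤ η̄}` lies
within `ε` of `{g ≤ 0}`, while `{g ≤ 0} ⊆ {g ≤ η*}` trivially. -/

section SublevelSets

variable {α : Type*} [PseudoMetricSpace α]

theorem hausdorffDist_le_of_subset {s t : Set α} {r : ℝ} (hst : s ⊆ t) (hr : 0 ≤ r)
    (h : ∀ x ∈ t, infDist x s ≤ r) : hausdorffDist s t ≤ r :=
  hausdorffDist_le_of_infDist hr (fun _ hx => (infDist_zero_of_mem (hst hx)).trans_le hr) h

theorem IsCompact.exists_pos_forall_infDist_sublevel_lt {K : Set α} {g : α → ℝ}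
    (hK : IsCompact K) (hg : ContinuousOn g K) {ε : ℝ} (hε : 0 < ε) :
    ∃ η > 0, ∀ x ∈ K, g x ≤ η → infDist x {y ∈ K | g y ≤ 0} < ε := by
  set C := {x ∈ K | ε ≤ infDist x {y ∈ K | g y ≤ 0}}
  have hC : IsCompact C := hK.inter_right (isClosed_le continuous_const (continuous_infDist_pt _))
  have hgC : ∀ x ∈ C, 0 < g x := fun x hx => not_le.1 fun hgx => by
    have := infDist_zero_of_mem (s := {y ∈ K | g y ≤ 0}) ⟨hx.1, hgx⟩
    linarith [hx.2]
  obtain ⟨η, hη, hηC⟩ := hC.exists_forall_le' (hg.mono fun x hx => hx.1) hgC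
  refine ⟨η / 2, by positivity, fun x hxK hgx => not_le.1 fun hx => ?_⟩
  linarith [hηC x ⟨hxK, hx⟩]

end SublevelSets

theorem statement15_general (n : ℕ)
    (g : EuclideanSpace ℝ (Fin n) → ℝ)
    (hg : ContinuousOn g (Metric.closedBall 0 1)) :
    ∀ ε > 0, ∃ ηbar > 0, ∀ ηstar ∈ Set.Ioc (0 : ℝ) ηbar,
      Metric.hausdorffDist
        {x ∈ Metric.closedBall (0 : EuclideanSpace ℝ (Fin n)) 1 | g x ≤ 0}
        {x ∈ Metric.closedBall (0 : EuclideanSpace ℝ (Fin n)) 1 | g x ≤ ηstar} ≤ ε := by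
  intro ε hε
  obtain ⟨ηbar, hηbar, hclose⟩ :=
    (isCompact_closedBall (0 : EuclideanSpace ℝ (Fin n)) 1).exists_pos_forall_infDist_sublevel_lt
      hg hε
  refine ⟨ηbar, hηbar, fun ηstar hηstar => hausdorffDist_le_of_subset ?_ hε.le ?_⟩
  · exact fun x hx => ⟨hx.1, hx.2.trans hηstar.1.le⟩
  · exact fun x hx => (hclose x hx.1 (hx.2.trans hηstar.2)).le

/-- stability of sublevel sets in Hausdorff distance. -/
theorem statement15 (n : ℕ) (hn : 1 ≤ n)
    (g : EuclideanSpace ℝ (Fin n) → ℝ)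
    (hg : ContinuousOn g (Metric.closedBall 0 1))
    (hpos : ∀ x ∈ Metric.sphere (0 : EuclideanSpace ℝ (Fin n)) 1, 0 < g x)
    (hne : ({x ∈ Metric.closedBall (0 : EuclideanSpace ℝ (Fin n)) 1 | g x ≤ 0}).Nonempty) :
    ∀ ε > 0, ∃ ηbar > 0, ∀ ηstar ∈ Set.Ioc (0 : ℝ) ηbar,
      Metric.hausdorffDist
        {x ∈ Metric.closedBall (0 : EuclideanSpace ℝ (Fin n)) 1 | g x ≤ 0}
        {x ∈ Metric.closedBall (0 : EuclideanSpace ℝ (Fin n)) 1 | g x ≤ ηstar} ≤ ε :=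
  statement15_general n g hg

end
end

section
/- Let n ≥ 1 and let g be a continuous real-valued function on the closed unit ball of ℝ^n with g > 0 on the unit sphere, and suppose {g ≤ 0} := {x in the closed unit ball : g(x) ≤ 0} is nonempty. Then for every ε > 0 there exists η̄ > 0 such that for every set A contained in the open unit ball of ℝ^n satisfying {x : g(x) < η} ⊆ A ⊆ {x : g(x) ≤ η̄} for some η > 0, the Hausdorff distance between the topological boundary (in ℝ^n) of {g ≤ 0} and the topological boundary (in ℝ^n) of A is at most ε. -/
open MeasureTheory Metric Set Filter

noncomputable section

/-!
Let `K = {g ≤ 0}`. It is compact and, as `g > 0` on the sphere, it lies in the open ball, hence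
in the interior of every admissible `A`. By compactness, for small `η̄` the sublevel set
`{g ≤ η̄}` lies in the `ε`-thickening of `K`, and every point of `∂K` is `ε`-close to a point
where `g > η̄`, which lies outside `A`. Since a segment from a point of a set to a point outside
it crosses the frontier, this bounds both halves of the Hausdorff distance by `ε`.
-/

open Topology

theorem IsPreconnected.inter_frontier_nonempty {X : Type*} [TopologicalSpace X] {t s : Set X}
    (ht : IsPreconnected t) (hts : (t ∩ s).Nonempty) (hts' : (t \ s).Nonempty) :
    (t ∩ frontier s).Nonempty := by
  by_contra! h
  have hcover : t ⊆ interior s ∪ (closure s)ᶜ := fun x hx => by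
    by_cases hxs : x ∈ interior s
    · exact Or.inl hxs
    · exact Or.inr fun hxc => h.subset ⟨hx, hxc, hxs⟩
  have hdisj : Disjoint (interior s) (closure s)ᶜ :=
    disjoint_compl_right_iff_subset.2 (interior_subset.trans subset_closure)
  rcases ht.subset_or_subset isOpen_interior isClosed_closure.isOpen_compl hdisj hcover
    with hint | hext
  · obtain ⟨x, hxt, hxs⟩ := hts'
    exact hxs (interior_subset (hint hxt))
  · obtain ⟨x, hxt, hxs⟩ := hts
    exact hext hxt (subset_closure hxs)

theorem exists_mem_frontier_dist_le {E : Type*} [NormedAddCommGroup E] [NormedSpace ℝ E]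
    {s : Set E} {x y : E} (hx : x ∈ s) (hy : y ∉ s) : ∃ z ∈ frontier s, dist x z ≤ dist x y := by
  obtain ⟨z, hz, hzs⟩ := (convex_segment x y).isPreconnected.inter_frontier_nonempty
    ⟨x, left_mem_segment ℝ x y, hx⟩ ⟨y, right_mem_segment ℝ x y, hy⟩
  exact ⟨z, hzs, (dist_add_dist_of_mem_segment hz).symm ▸ le_add_of_nonneg_right dist_nonneg⟩

theorem hausdorffDist_frontier_le {E : Type*} [NormedAddCommGroup E] [NormedSpace ℝ E]
    {K A : Set E} {ε : ℝ} (hε : 0 ≤ ε) (hK : IsClosed K) (hKA : K ⊆ interior A)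
    (hK_out : frontier K ⊆ thickening ε Aᶜ) (hA_in : frontier A ⊆ thickening ε K) :
    hausdorffDist (frontier K) (frontier A) ≤ ε := by
  refine hausdorffDist_le_of_mem_dist hε (fun x hx => ?_) (fun y hy => ?_)
  · obtain ⟨y, hyA, hxy⟩ := mem_thickening_iff.1 (hK_out hx)
    obtain ⟨z, hz, hxz⟩ :=
      exists_mem_frontier_dist_le (interior_subset (hKA (hK.frontier_subset hx))) hyA
    exact ⟨z, hz, hxz.trans hxy.le⟩
  · obtain ⟨k, hk, hyk⟩ := mem_thickening_iff.1 (hA_in hy)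
    have hyK : y ∈ Kᶜ := fun hyK => hy.2 (hKA hyK)
    obtain ⟨z, hz, hyz⟩ := exists_mem_frontier_dist_le hyK (not_not_intro hk)
    exact ⟨z, frontier_compl K ▸ hz, hyz.trans hyk.le⟩

theorem frontier_subset_thickening_diff {X : Type*} [PseudoMetricSpace X] {K s : Set X}
    {ε : ℝ} (hε : 0 < ε) (hKs : closure K ⊆ interior s) :
    frontier K ⊆ thickening ε (s \ K) := by
  intro x hx
  have hnhds : ball x ε ∩ interior s ∈ 𝓝 x :=
    inter_mem (ball_mem_nhds x hε) (isOpen_interior.mem_nhds (hKs hx.1))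
  obtain ⟨y, ⟨hyx, hys⟩, hyK⟩ :=
    mem_closure_iff_nhds.1 (frontier_eq_closure_inter_closure.subset hx).2 _ hnhds
  exact mem_thickening_iff.2 ⟨y, ⟨interior_subset hys, hyK⟩, mem_ball'.1 hyx⟩

theorem IsCompact.eventually_sep_le_subset {X : Type*} [TopologicalSpace X] {s U : Set X}
    {g : X → ℝ} (hs : IsCompact s) (hg : ContinuousOn g s) (hU : IsOpen U)
    (hsU : {x ∈ s | g x ≤ 0} ⊆ U) : ∀ᶠ η in 𝓝 0, {x ∈ s | g x ≤ η} ⊆ U := by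
  obtain ⟨m, hm, hmin⟩ := (hs.diff hU).exists_forall_le' (hg.mono sdiff_subset)
    fun x hx => lt_of_not_ge fun hgx => hx.2 (hsU ⟨hx.1, hgx⟩)
  filter_upwards [gt_mem_nhds hm] with η hη x hx
  by_contra hxU
  linarith [hmin x ⟨hx.1, hxU⟩, hx.2]

theorem IsCompact.eventually_subset_thickening_sep_lt {X : Type*} [PseudoMetricSpace X]
    {F s : Set X} {g : X → ℝ} {ε : ℝ} (hF : IsCompact F)
    (hFs : F ⊆ thickening ε {x ∈ s | 0 < g x}) :
    ∀ᶠ η in 𝓝 0, F ⊆ thickening ε {x ∈ s | η < g x} := by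
  refine hF.eventually_forall_of_forall_eventually fun y hy => ?_
  obtain ⟨z, ⟨hzs, hgz⟩, hyz⟩ := mem_thickening_iff.1 (hFs hy)
  filter_upwards [(gt_mem_nhds hgz).prod_nhds (isOpen_ball.mem_nhds (mem_ball.2 hyz))]
    with p ⟨hp, hpz⟩
  exact mem_thickening_iff.2 ⟨z, ⟨hzs, hp⟩, mem_ball.1 hpz⟩

theorem statement16_general
    (n : ℕ)
    (g : EuclideanSpace ℝ (Fin n) → ℝ)
    (hg : ContinuousOn g (Metric.closedBall 0 1))
    (hpos : ∀ x ∈ Metric.sphere (0 : EuclideanSpace ℝ (Fin n)) 1, 0 < g x) :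
    ∀ ε > 0, ∃ ηbar > 0, ∀ A : Set (EuclideanSpace ℝ (Fin n)),
      A ⊆ Metric.ball 0 1 →
      (∃ η > 0, {x ∈ Metric.closedBall (0 : EuclideanSpace ℝ (Fin n)) 1 | g x < η} ⊆ A) →
      A ⊆ {x ∈ Metric.closedBall (0 : EuclideanSpace ℝ (Fin n)) 1 | g x ≤ ηbar} →
      Metric.hausdorffDist
        (frontier {x ∈ Metric.closedBall (0 : EuclideanSpace ℝ (Fin n)) 1 | g x ≤ 0})
        (frontier A) ≤ ε := by
  intro ε hε
  set K := {x ∈ closedBall (0 : EuclideanSpace ℝ (Fin n)) 1 | g x ≤ 0}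
  have hK_closed : IsClosed K := isClosed_closedBall.isClosed_le hg continuousOn_const
  have hK_ball : K ⊆ ball 0 1 := fun x hx =>
    mem_ball.2 <| (mem_closedBall.1 hx.1).lt_of_ne fun h => (hpos x h).not_ge hx.2
  have hK_compact : IsCompact K :=
    (isCompact_closedBall 0 1).of_isClosed_subset hK_closed fun x hx => hx.1
  have hK_far : frontier K ⊆ thickening ε {x ∈ closedBall 0 1 | 0 < g x} :=
    (frontier_subset_thickening_diff hε (hK_closed.closure_eq.le.trans (hK_ball.trans
      ball_subset_interior_closedBall))).trans
      (thickening_subset_of_subset ε fun x hx => ⟨hx.1, not_le.1 fun h => hx.2 ⟨hx.1, h⟩⟩)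
  have hsub_eventually : ∀ᶠ η in 𝓝 0, {x ∈ closedBall 0 1 | g x ≤ η} ⊆ thickening ε K :=
    (isCompact_closedBall 0 1).eventually_sep_le_subset hg isOpen_thickening
      (self_subset_thickening hε K)
  have hfar_eventually : ∀ᶠ η in 𝓝 0, frontier K ⊆ thickening ε {x ∈ closedBall 0 1 | η < g x} :=
    (hK_compact.of_isClosed_subset isClosed_frontier hK_closed.frontier_subset)
      |>.eventually_subset_thickening_sep_lt hK_far
  obtain ⟨ηbar, ⟨hsub, hfar⟩, hηbar⟩ := ((hsub_eventually.and hfar_eventually).filter_mono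
    nhdsWithin_le_nhds |>.and (self_mem_nhdsWithin (s := Ioi 0))).exists
  refine ⟨ηbar, hηbar, fun A _ ⟨η, hη, hηA⟩ hAηbar => hausdorffDist_frontier_le hε.le hK_closed
    ?_ ?_ ?_⟩
  · have hopen : IsOpen (ball 0 1 ∩ g ⁻¹' Iio η) :=
      (hg.mono ball_subset_closedBall).isOpen_inter_preimage isOpen_ball isOpen_Iio
    exact fun x hx => interior_maximal (fun y hy => hηA ⟨ball_subset_closedBall hy.1, hy.2⟩)
      hopen ⟨hK_ball hx, hx.2.trans_lt hη⟩
  · exact hfar.trans (thickening_subset_of_subset ε fun x hx hxA => (hAηbar hxA).2.not_gt hx.2)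
  · exact frontier_subset_closure.trans <|
      (closure_minimal hAηbar (isClosed_closedBall.isClosed_le hg continuousOn_const)).trans hsub

/-- stability of the boundaries of sets trapped between sublevel
sets, in Hausdorff distance. -/
theorem statement16 (n : ℕ) (hn : 1 ≤ n)
    (g : EuclideanSpace ℝ (Fin n) → ℝ)
    (hg : ContinuousOn g (Metric.closedBall 0 1))
    (hpos : ∀ x ∈ Metric.sphere (0 : EuclideanSpace ℝ (Fin n)) 1, 0 < g x)
    (hne : ({x ∈ Metric.closedBall (0 : EuclideanSpace ℝ (Fin n)) 1 | g x ≤ 0}).Nonempty) :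
    ∀ ε > 0, ∃ ηbar > 0, ∀ A : Set (EuclideanSpace ℝ (Fin n)),
      A ⊆ Metric.ball 0 1 →
      (∃ η > 0, {x ∈ Metric.closedBall (0 : EuclideanSpace ℝ (Fin n)) 1 | g x < η} ⊆ A) →
      A ⊆ {x ∈ Metric.closedBall (0 : EuclideanSpace ℝ (Fin n)) 1 | g x ≤ ηbar} →
      Metric.hausdorffDist
        (frontier {x ∈ Metric.closedBall (0 : EuclideanSpace ℝ (Fin n)) 1 | g x ≤ 0})
        (frontier A) ≤ ε :=
  statement16_general n g hg hpos
end
end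

section
/- For integers n ≥ 2 and k ≥ 1, set κ := k/(n−1) and ρ̄(k, n) := κ^{−1/((n−1)(κ+1))} · (κ^{−κ/(κ+1)} + κ^{1/(κ+1)})^{−1/((n−1)κ)}. Then 0 < ρ̄(k, n) < 1 for all such n and k, and for each fixed n ≥ 2, ρ̄(k, n) → 1 as k → ∞. -/
open MeasureTheory Metric Set Filter

noncomputable section

/-! Since `κ ^ (1/(κ+1)) = κ · κ ^ (-κ/(κ+1))`, the powers of `κ` in `ρ̄(k, n)` cancel and
`ρ̄(k, n) = (1 + κ) ^ (-1/k)` with `k = (n-1) κ`. This lies in `(0, 1)` because `1 + κ > 1`, and it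
tends to `1` as `k → ∞` for the same reason that `y ^ (-1/y) → 1` as `y → ∞`. -/

theorem rpow_neg_div_add_rpow_one_div {κ : ℝ} (hκ : 0 < κ) :
    κ ^ (-κ / (κ + 1)) + κ ^ (1 / (κ + 1)) = κ ^ (-κ / (κ + 1)) * (1 + κ) := by
  have hexp : 1 / (κ + 1) = -κ / (κ + 1) + 1 := by field_simp; ring
  rw [hexp, Real.rpow_add hκ, Real.rpow_one]
  ring

theorem rhoBar_eq_one_add_rpow {k n : ℕ} (hk : 0 < k) (hn : 1 < n) :
    rhoBar k n = (1 + (k : ℝ) / ((n : ℝ) - 1)) ^ (-1 / (k : ℝ)) := by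
  have hc : (0 : ℝ) < (n : ℝ) - 1 := sub_pos.2 (Nat.one_lt_cast.2 hn)
  have hk' : (0 : ℝ) < k := Nat.cast_pos.2 hk
  unfold rhoBar
  set κ : ℝ := (k : ℝ) / ((n : ℝ) - 1) with hκ_def
  have hκ : 0 < κ := div_pos hk' hc
  have hk_eq : ((n : ℝ) - 1) * κ = k := by rw [hκ_def]; field_simp
  have hcancel :
      -1 / (((n : ℝ) - 1) * (κ + 1)) + -κ / (κ + 1) * (-1 / (((n : ℝ) - 1) * κ)) = 0 := by
    field_simp; ring
  rw [rpow_neg_div_add_rpow_one_div hκ, Real.mul_rpow (by positivity) (by positivity),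
    ← Real.rpow_mul hκ.le, ← mul_assoc, ← Real.rpow_add hκ, hcancel, Real.rpow_zero, one_mul,
    hk_eq]

theorem rhoBar_pos {k n : ℕ} (hk : 0 < k) (hn : 1 < n) : 0 < rhoBar k n := by
  rw [rhoBar_eq_one_add_rpow hk hn]
  have : (0 : ℝ) ≤ (k : ℝ) / ((n : ℝ) - 1) :=
    div_nonneg (Nat.cast_nonneg k) (sub_pos.2 (Nat.one_lt_cast.2 hn)).le
  positivity

theorem rhoBar_lt_one {k n : ℕ} (hk : 0 < k) (hn : 1 < n) : rhoBar k n < 1 := by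
  have hc : (0 : ℝ) < (n : ℝ) - 1 := sub_pos.2 (Nat.one_lt_cast.2 hn)
  have hk' : (0 : ℝ) < k := Nat.cast_pos.2 hk
  rw [rhoBar_eq_one_add_rpow hk hn]
  exact Real.rpow_lt_one_of_one_lt_of_neg (by linarith [div_pos hk' hc])
    (div_neg_of_neg_of_pos (by norm_num) hk')

theorem tendsto_rhoBar_atTop {n : ℕ} (hn : 1 < n) :
    Tendsto (fun k : ℕ => rhoBar k n) atTop (nhds 1) := by
  have hc : (0 : ℝ) < (n : ℝ) - 1 := sub_pos.2 (Nat.one_lt_cast.2 hn)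
  have hy : Tendsto (fun k : ℕ => 1 + (k : ℝ) / ((n : ℝ) - 1)) atTop atTop :=
    tendsto_atTop_add_const_left _ _
      ((tendsto_id.atTop_div_const hc).comp tendsto_natCast_atTop_atTop)
  -- with `y = 1 + k/(n-1)` we have `k = (n-1) y - (n-1)`, so `ρ̄ = y ^ (-1/((n-1) y - (n-1)))`
  refine ((tendsto_rpow_div_mul_add (-1) ((n : ℝ) - 1) (-((n : ℝ) - 1)) hc.ne).comp hy).congr' ?_
  filter_upwards [eventually_gt_atTop 0] with k hk
  rw [Function.comp_apply, rhoBar_eq_one_add_rpow hk hn]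
  congr 2
  field_simp
  ring

/-- `0 < ρ̄(k,n) < 1`, and `ρ̄(k,n) → 1` as `k → ∞` for fixed `n ≥ 2`. -/
theorem statement17 (n : ℕ) (hn : 2 ≤ n) :
    (∀ k : ℕ, 1 ≤ k → 0 < rhoBar k n ∧ rhoBar k n < 1) ∧
    Filter.Tendsto (fun k : ℕ => rhoBar k n) Filter.atTop (nhds 1) :=
  ⟨fun _ hk => ⟨rhoBar_pos hk hn, rhoBar_lt_one hk hn⟩, tendsto_rhoBar_atTop hn⟩

end
end

section
/- Let n ≥ 2 and k ≥ 1 be integers. For A > 0 and t ∈ ℝ define g_{A,t}(r) := A·r^{1−n} + t − 1 + r^k for r > 0. Then: (a) for each A > 0 and t ∈ ℝ, the function g_{A,t} attains its global minimum over (0, ∞) exactly at the point r̄ = ((n−1)A/k)^{1/(n+k−1)}; and (b) for ρ > 0, there exist A > 0 and t ≥ 0 such that g_{A,t}(r) ≥ 0 for all r > 0 and g_{A,t}(ρ) = 0 if and only if ρ ≤ ρ̄(k, n), where, with κ := k/(n−1), ρ̄(k, n) := κ^{−1/((n−1)(κ+1))} · (κ^{−κ/(κ+1)} + κ^{1/(κ+1)})^{−1/((n−1)κ)}.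 -/
open MeasureTheory Metric Set Filter

noncomputable section

/-!
Let `R` be the critical point, `R ^ (n + k - 1) = (n - 1) A / k`. Substituting `r = s R` turns
`A r ^ (1 - n) + r ^ k` into `R ^ k / (n - 1) * (k s ^ (1 - n) + (n - 1) s ^ k)`, and weighted
AM-GM with weights `k / (n + k - 1)` and `(n - 1) / (n + k - 1)`, for which the geometric mean of
`s ^ (1 - n)` and `s ^ k` is `1`, bounds the bracket below by `n + k - 1`, with equality only at
`s = 1`. The minimum value of `g_{A,t}` is therefore `(1 + κ) R ^ k + t - 1`. If `g_{A,t} ≥ 0`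
vanishes at `ρ`, then `ρ = R` and `t = 1 - (1 + κ) ρ ^ k ≥ 0`; conversely `A = κ ρ ^ (n + k - 1)`
puts the minimum at `ρ`. So touching is possible exactly when `(1 + κ) ρ ^ k ≤ 1`, and
`ρ̄(k, n)` simplifies to `(1 + κ) ^ (-1 / k)`.
-/

lemma add_lt_mul_rpow_neg_add_mul_rpow {a b s : ℝ} (ha : 0 < a) (hb : 0 < b) (hs : 0 < s)
    (hs1 : s ≠ 1) : a + b < b * s ^ (-a) + a * s ^ b := by
  have hab : 0 < a + b := by linarith
  have hw : b / (a + b) + a / (a + b) = 1 := by field_simp; ring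
  have hne : s ^ (-a) ≠ s ^ b := fun h => by
    linarith [(Real.rpow_right_inj hs hs1).1 h]
  have hgm : (s ^ (-a)) ^ (b / (a + b)) * (s ^ b) ^ (a / (a + b)) = 1 := by
    rw [← Real.rpow_mul hs.le, ← Real.rpow_mul hs.le, ← Real.rpow_add hs]
    convert Real.rpow_zero s using 2
    ring
  have hamgm := (Real.geom_mean_lt_arith_mean2_weighted_iff_of_pos (div_pos hb hab)
    (div_pos ha hab) (by positivity) (by positivity) hw).2 hne
  rwa [hgm, div_mul_eq_mul_div, div_mul_eq_mul_div, ← add_div, one_lt_div hab] at hamgm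

def barrier (a b A r : ℝ) : ℝ := A * r ^ (-a) + r ^ b

def barrierArgmin (a b A : ℝ) : ℝ := (a * A / b) ^ (1 / (a + b))

section
variable {a b A r : ℝ}

lemma barrierArgmin_pos (ha : 0 < a) (hb : 0 < b) (hA : 0 < A) : 0 < barrierArgmin a b A := by
  unfold barrierArgmin; positivity

lemma barrierArgmin_rpow (ha : 0 < a) (hb : 0 < b) (hA : 0 < A) :
    barrierArgmin a b A ^ (a + b) = a * A / b := by
  rw [barrierArgmin, ← Real.rpow_mul (by positivity),
    one_div_mul_cancel (by positivity : (0 : ℝ) < a + b).ne', Real.rpow_one]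

lemma barrierArgmin_div_mul_rpow (ha : 0 < a) (hb : 0 < b) (hr : 0 < r) :
    barrierArgmin a b (b / a * r ^ (a + b)) = r := by
  rw [barrierArgmin, show a * (b / a * r ^ (a + b)) / b = r ^ (a + b) by field_simp,
    ← Real.rpow_mul hr.le, mul_one_div_cancel (by positivity : (0 : ℝ) < a + b).ne',
    Real.rpow_one]

lemma barrier_eq_mul (ha : 0 < a) (hb : 0 < b) (hA : 0 < A) (hr : 0 < r) :
    barrier a b A r = barrierArgmin a b A ^ b / a *
      (b * (r / barrierArgmin a b A) ^ (-a) + a * (r / barrierArgmin a b A) ^ b) := by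
  have hR := barrierArgmin_pos ha hb hA
  have hA' : A = b / a * barrierArgmin a b A ^ (a + b) := by
    rw [barrierArgmin_rpow ha hb hA]; field_simp
  set R := barrierArgmin a b A
  rw [barrier, Real.div_rpow hr.le hR.le, Real.div_rpow hr.le hR.le, hA', Real.rpow_add hR,
    Real.rpow_neg hR.le, Real.rpow_neg hr.le]
  field_simp

lemma barrier_barrierArgmin (ha : 0 < a) (hb : 0 < b) (hA : 0 < A) :
    barrier a b A (barrierArgmin a b A) = (1 + b / a) * barrierArgmin a b A ^ b := by
  have hR := barrierArgmin_pos ha hb hA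
  rw [barrier_eq_mul ha hb hA hR, div_self hR.ne', Real.one_rpow, Real.one_rpow]
  field_simp
  ring

lemma barrier_barrierArgmin_lt (ha : 0 < a) (hb : 0 < b) (hA : 0 < A) (hr : 0 < r)
    (hne : r ≠ barrierArgmin a b A) :
    barrier a b A (barrierArgmin a b A) < barrier a b A r := by
  have hR := barrierArgmin_pos ha hb hA
  have hamgm := add_lt_mul_rpow_neg_add_mul_rpow ha hb (div_pos hr hR)
    (fun h => hne ((div_eq_one_iff_eq hR.ne').1 h))
  rw [barrier_barrierArgmin ha hb hA, barrier_eq_mul ha hb hA hr]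
  calc (1 + b / a) * barrierArgmin a b A ^ b = barrierArgmin a b A ^ b / a * (a + b) := by
        field_simp
    _ < _ := by gcongr

lemma barrier_barrierArgmin_le (ha : 0 < a) (hb : 0 < b) (hA : 0 < A) (hr : 0 < r) :
    barrier a b A (barrierArgmin a b A) ≤ barrier a b A r := by
  rcases eq_or_ne r (barrierArgmin a b A) with rfl | hne
  · rfl
  · exact (barrier_barrierArgmin_lt ha hb hA hr hne).le

lemma eq_barrierArgmin_of_barrier_le (ha : 0 < a) (hb : 0 < b) (hA : 0 < A) (hr : 0 < r)
    (h : barrier a b A r ≤ barrier a b A (barrierArgmin a b A)) : r = barrierArgmin a b A := by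
  by_contra hne
  exact (barrier_barrierArgmin_lt ha hb hA hr hne).not_ge h

theorem exists_barrier_touching_iff (ha : 0 < a) (hb : 0 < b) {ρ : ℝ} (hρ : 0 < ρ) :
    (∃ A > (0 : ℝ), ∃ t ≥ (0 : ℝ),
        (∀ r : ℝ, 0 < r → 0 ≤ barrier a b A r + t - 1) ∧ barrier a b A ρ + t - 1 = 0) ↔
      (1 + b / a) * ρ ^ b ≤ 1 := by
  constructor
  · rintro ⟨A, hA, t, ht, hnonneg, htouch⟩
    have hR := barrierArgmin_pos ha hb hA
    have hρR : ρ = barrierArgmin a b A :=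
      eq_barrierArgmin_of_barrier_le ha hb hA hρ (by linarith [hnonneg _ hR])
    have := barrier_barrierArgmin ha hb hA
    rw [← hρR] at this
    linarith
  · intro hle
    set A := b / a * ρ ^ (a + b)
    have hA : 0 < A := by positivity
    have hRρ : barrierArgmin a b A = ρ := barrierArgmin_div_mul_rpow ha hb hρ
    have hmin := barrier_barrierArgmin ha hb hA
    rw [hRρ] at hmin
    refine ⟨A, hA, 1 - (1 + b / a) * ρ ^ b, by linarith, fun r hr => ?_, by rw [hmin]; ring⟩
    have := barrier_barrierArgmin_le ha hb hA hr
    rw [hRρ, hmin] at this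
    linarith

end

lemma rpow_mul_rpow_add_rpow_eq {κ ν : ℝ} (hκ : 0 < κ) (hν : 0 < ν) :
    κ ^ (-1 / (ν * (κ + 1))) * (κ ^ (-κ / (κ + 1)) + κ ^ (1 / (κ + 1))) ^ (-1 / (ν * κ)) =
      (1 + κ) ^ (-1 / (ν * κ)) := by
  have hsum : κ ^ (-κ / (κ + 1)) + κ ^ (1 / (κ + 1)) = κ ^ (-κ / (κ + 1)) * (1 + κ) := by
    rw [mul_add, mul_one, ← Real.rpow_add_one hκ.ne']
    congr 2
    field_simp
    ring
  rw [hsum, Real.mul_rpow (by positivity) (by positivity), ← Real.rpow_mul hκ.le, ← mul_assoc,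
    ← Real.rpow_add hκ]
  convert one_mul _ using 2
  convert Real.rpow_zero κ using 2
  field_simp
  ring

lemma rhoBar_eq {k n : ℕ} (hn : 1 < n) (hk : 0 < k) :
    rhoBar k n = (1 + (k : ℝ) / ((n : ℝ) - 1)) ^ (-1 / (k : ℝ)) := by
  have hν : (0 : ℝ) < (n : ℝ) - 1 := by
    have : (1 : ℝ) < n := by exact_mod_cast hn
    linarith
  rw [rhoBar, rpow_mul_rpow_add_rpow_eq (by positivity) hν, mul_div_cancel₀ _ hν.ne']

lemma mul_rpow_le_one_iff {c b ρ : ℝ} (hc : 0 < c) (hb : 0 < b) (hρ : 0 ≤ ρ) :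
    c * ρ ^ b ≤ 1 ↔ ρ ≤ c ^ (-1 / b) := by
  rw [neg_div, Real.rpow_neg hc.le, ← Real.inv_rpow hc.le, one_div,
    Real.le_rpow_inv_iff_of_pos hρ (by positivity) hb, inv_eq_one_div, le_div_iff₀ hc, mul_comm]

lemma gfun_eq (n k : ℕ) (A t r : ℝ) :
    gfun n k A t r = barrier ((n : ℝ) - 1) k A r + t - 1 := by
  rw [gfun, barrier, neg_sub, Real.rpow_natCast]
  ring

/-- (a) `g_{A,t}` attains its global minimum on `(0,∞)` exactly at
`r̄ = ((n-1)A/k)^{1/(n+k-1)}`; (b) the touching characterization via `ρ̄(k,n)`. -/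
theorem statement18 (n k : ℕ) (hn : 2 ≤ n) (hk : 1 ≤ k) :
    (∀ A t : ℝ, 0 < A →
      (∀ r : ℝ, 0 < r →
        gfun n k A t ((((n : ℝ) - 1) * A / (k : ℝ)) ^ ((1 : ℝ) / ((n : ℝ) + (k : ℝ) - 1))) ≤
          gfun n k A t r) ∧
      (∀ r : ℝ, 0 < r →
        gfun n k A t r =
          gfun n k A t ((((n : ℝ) - 1) * A / (k : ℝ)) ^ ((1 : ℝ) / ((n : ℝ) + (k : ℝ) - 1))) →
        r = (((n : ℝ) - 1) * A / (k : ℝ)) ^ ((1 : ℝ) / ((n : ℝ) + (k : ℝ) - 1)))) ∧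
    (∀ ρ : ℝ, 0 < ρ →
      ((∃ A > (0 : ℝ), ∃ t ≥ (0 : ℝ),
          (∀ r : ℝ, 0 < r → 0 ≤ gfun n k A t r) ∧ gfun n k A t ρ = 0) ↔
        ρ ≤ rhoBar k n)) := by
  have ha : (0 : ℝ) < (n : ℝ) - 1 := by
    have : (2 : ℝ) ≤ n := by exact_mod_cast hn
    linarith
  have hb : (0 : ℝ) < k := by exact_mod_cast hk
  have hargmin : ∀ A : ℝ, (((n : ℝ) - 1) * A / (k : ℝ)) ^ ((1 : ℝ) / ((n : ℝ) + (k : ℝ) - 1)) =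
      barrierArgmin ((n : ℝ) - 1) k A := fun A => by rw [barrierArgmin, sub_add_eq_add_sub]
  simp only [gfun_eq, hargmin]
  refine ⟨fun A t hA => ⟨fun r hr => ?_, fun r hr h => ?_⟩, fun ρ hρ => ?_⟩
  · linarith [barrier_barrierArgmin_le ha hb hA hr]
  · exact eq_barrierArgmin_of_barrier_le ha hb hA hr (by linarith)
  · rw [exists_barrier_touching_iff ha hb hρ, rhoBar_eq hn hk,
      mul_rpow_le_one_iff (by positivity) hb hρ.le]
end
end

section
/- Let n ≥ 1, let K ⊂ ℝ^n be a nonempty compact set contained in the ball of radius 1/4 centered at the origin, and let η > 0. Then there exists a real polynomial f on ℝ^n such that K ⊆ {x ∈ ℝ^n : f(x) ≤ 0}, {x ∈ ℝ^n : f(x) ≤ 0} ⊆ {x ∈ ℝ^n : dist(x, K) ≤ η}, and f(x) > 0 for all x ∈ ℝ^n with |x| > 1. -/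
open MeasureTheory Metric Set Filter

noncomputable section

/-!
The function `G x = max (infDist x K) (‖x‖ - 1/4)` vanishes on `K`, dominates `infDist x K`,
and exceeds `3/4` outside the unit ball. A Stone–Weierstrass approximation `p` of `G - ε` on
the ball of radius `2` inherits these properties up to `ε` there. Adding the nonnegative
penalty `M (‖x‖ / 2) ^ (2N)`, which is `< ε` on the unit ball for large `N` and exceeds `|p|`
beyond radius `2` as soon as `2N ≥ deg p` and `M > 2 ^ deg p · ∑ |coeff p|`, makes the
polynomial positive far away without spoiling it on the unit ball.
-/

section PolynomialBounds

variable {m : ℕ}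

lemma abs_pev_le_of_one_le_norm (q : MvPolynomial (Fin m) ℝ) {x : EuclideanSpace ℝ (Fin m)}
    (hx : 1 ≤ ‖x‖) :
    |pev q x| ≤ (∑ d ∈ q.support, |MvPolynomial.coeff d q|) * ‖x‖ ^ q.totalDegree := by
  rw [pev, MvPolynomial.eval_eq, Finset.sum_mul]
  refine (Finset.abs_sum_le_sum_abs _ _).trans (Finset.sum_le_sum fun d hd => ?_)
  rw [abs_mul]
  gcongr
  calc |∏ i ∈ d.support, x i ^ d i| = ∏ i ∈ d.support, |x i| ^ d i := by
        simp only [Finset.abs_prod, abs_pow]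
    _ ≤ ∏ i ∈ d.support, ‖x‖ ^ d i := by
        gcongr with i
        exact PiLp.norm_apply_le x i
    _ = ‖x‖ ^ (∑ i ∈ d.support, d i) := Finset.prod_pow_eq_pow_sum _ _ _
    _ ≤ ‖x‖ ^ q.totalDegree := pow_le_pow_right₀ hx (MvPolynomial.le_totalDegree hd)

lemma exists_pev_near_of_isCompact {s : Set (EuclideanSpace ℝ (Fin m))} (hs : IsCompact s)
    {F : EuclideanSpace ℝ (Fin m) → ℝ} (hF : Continuous F) {ε : ℝ} (hε : 0 < ε) :
    ∃ p : MvPolynomial (Fin m) ℝ, ∀ x ∈ s, |pev p x - F x| < ε := by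
  have : CompactSpace s := isCompact_iff_compactSpace.mp hs
  let coord : Fin m → C(s, ℝ) := fun i =>
    ⟨fun x => (x : EuclideanSpace ℝ (Fin m)) i,
      (EuclideanSpace.proj i).continuous.comp continuous_subtype_val⟩
  let φ : MvPolynomial (Fin m) ℝ →ₐ[ℝ] C(s, ℝ) := MvPolynomial.aeval coord
  have φ_apply (q : MvPolynomial (Fin m) ℝ) (x : s) : φ q x = pev q x := by
    rw [← ContinuousMap.evalAlgHom_apply ℝ ℝ x, ← AlgHom.comp_apply, MvPolynomial.comp_aeval]
    rfl
  have hsep : (φ.range : Subalgebra ℝ C(s, ℝ)).SeparatesPoints := by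
    intro x y hxy
    obtain ⟨i, hi⟩ : ∃ i, (x : EuclideanSpace ℝ (Fin m)) i ≠ (y : EuclideanSpace ℝ (Fin m)) i := by
      by_contra! h
      exact hxy (Subtype.ext (PiLp.ext h))
    exact ⟨_, ⟨φ (MvPolynomial.X i), ⟨MvPolynomial.X i, rfl⟩, rfl⟩,
      by simpa [φ_apply, pev] using hi⟩
  obtain ⟨⟨g, ⟨p, rfl⟩⟩, hg⟩ :=
    ContinuousMap.exists_mem_subalgebra_near_continuous_of_separatesPoints
      φ.range hsep (fun x : s => F x) (hF.comp continuous_subtype_val) ε hε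
  exact ⟨p, fun x hx => by simpa [φ_apply, Real.norm_eq_abs] using hg ⟨x, hx⟩⟩

lemma pev_sum_X_sq (x : EuclideanSpace ℝ (Fin m)) :
    pev (∑ i, MvPolynomial.X i ^ 2) x = ‖x‖ ^ 2 := by
  simp [pev, EuclideanSpace.real_norm_sq_eq]

lemma exists_pev_nonneg_small_on_ball_dominating (p : MvPolynomial (Fin m) ℝ)
    {r R ε : ℝ} (hr : 0 ≤ r) (hrR : r < R) (hR : 1 ≤ R) (hε : 0 < ε) :
    ∃ q : MvPolynomial (Fin m) ℝ, (∀ x, 0 ≤ pev q x) ∧ (∀ x, ‖x‖ ≤ r → pev q x < ε) ∧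
      ∀ x, R ≤ ‖x‖ → |pev p x| < pev q x := by
  set A := ∑ d ∈ p.support, |MvPolynomial.coeff d p|
  set M := A * R ^ p.totalDegree + 1
  have hA : 0 ≤ A := Finset.sum_nonneg fun _ _ => abs_nonneg _
  have hM : 0 < M := by positivity
  have hρ : (r / R) ^ 2 < 1 := by
    rw [sq_lt_one_iff₀ (by positivity)]
    exact (div_lt_one (by linarith)).2 hrR
  obtain ⟨N, hN, hdeg⟩ : ∃ N : ℕ, M * ((r / R) ^ 2) ^ N < ε ∧ p.totalDegree ≤ 2 * N := by
    have hsmall : ∀ᶠ N : ℕ in atTop, M * ((r / R) ^ 2) ^ N < ε := by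
      have := (tendsto_pow_atTop_nhds_zero_of_lt_one (by positivity) hρ).const_mul M
      rw [mul_zero] at this
      exact this.eventually (gt_mem_nhds hε)
    exact (hsmall.and (eventually_ge_atTop p.totalDegree)).exists.imp fun N h => ⟨h.1, by omega⟩
  have hq (x : EuclideanSpace ℝ (Fin m)) :
      pev (MvPolynomial.C M * (MvPolynomial.C (R ^ 2)⁻¹ * ∑ i, MvPolynomial.X i ^ 2) ^ N) x =
        M * ((‖x‖ / R) ^ 2) ^ N := by
    simp only [pev, map_mul, map_pow, MvPolynomial.eval_C]
    rw [← pev, pev_sum_X_sq]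
    ring
  refine ⟨_, fun x => by rw [hq]; positivity, fun x hx => ?_, fun x hx => ?_⟩
  · rw [hq]
    refine lt_of_le_of_lt ?_ hN
    gcongr
  · have hxR : 1 ≤ ‖x‖ / R := (one_le_div (by linarith)).2 hx
    rw [hq, ← pow_mul]
    calc |pev p x| ≤ A * ‖x‖ ^ p.totalDegree := abs_pev_le_of_one_le_norm p (hR.trans hx)
      _ = A * R ^ p.totalDegree * (‖x‖ / R) ^ p.totalDegree := by
        rw [div_pow, mul_assoc, mul_div_cancel₀ _ (by positivity)]
      _ < M * (‖x‖ / R) ^ p.totalDegree := by gcongr; linarith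
      _ ≤ M * (‖x‖ / R) ^ (2 * N) := by gcongr

lemma exists_pev_near_on_ball_pos_outside {F : EuclideanSpace ℝ (Fin m) → ℝ}
    (hF : Continuous F) {r R ε : ℝ} (hr : 0 ≤ r) (hrR : r < R) (hR : 1 ≤ R) (hε : 0 < ε) :
    ∃ f : MvPolynomial (Fin m) ℝ, (∀ x, ‖x‖ ≤ r → |pev f x - F x| < ε) ∧
      (∀ x, ‖x‖ ≤ R → F x - ε < pev f x) ∧ ∀ x, R < ‖x‖ → 0 < pev f x := by
  obtain ⟨p, hp⟩ := exists_pev_near_of_isCompact (isCompact_closedBall 0 R) hF (half_pos hε)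
  obtain ⟨q, hq0, hqr, hqR⟩ :=
    exists_pev_nonneg_small_on_ball_dominating p hr hrR hR (half_pos hε)
  have hpev (x) : pev (p + q) x = pev p x + pev q x := by simp [pev]
  have hpR (x : EuclideanSpace ℝ (Fin m)) (hx : ‖x‖ ≤ R) := abs_lt.1 (hp x (by simpa using hx))
  refine ⟨p + q, fun x hx => ?_, fun x hx => ?_, fun x hx => ?_⟩
  · have hpx := hpR x (hx.trans hrR.le)
    rw [hpev, abs_lt]
    constructor <;> linarith [hqr x hx, hq0 x]
  · rw [hpev]
    linarith [hpR x hx, hq0 x]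
  · rw [hpev]
    linarith [neg_abs_le (pev p x), hqR x hx.le]

end PolynomialBounds

theorem statement19_general (n : ℕ)
    (K : Set (EuclideanSpace ℝ (Fin n)))
    (hKsub : K ⊆ Metric.ball 0 (1 / 4)) (η : ℝ) (hη : 0 < η) :
    ∃ f : MvPolynomial (Fin n) ℝ,
      (∀ x ∈ K, pev f x ≤ 0) ∧
      (∀ x : EuclideanSpace ℝ (Fin n), pev f x ≤ 0 → Metric.infDist x K ≤ η) ∧
      (∀ x : EuclideanSpace ℝ (Fin n), 1 < ‖x‖ → 0 < pev f x) := by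
  obtain ⟨ε, hε, hεη, hε34⟩ : ∃ ε : ℝ, 0 < ε ∧ 2 * ε ≤ η ∧ 2 * ε ≤ 3 / 4 :=
    ⟨min η (3 / 4) / 2, by positivity, by linarith [min_le_left η (3 / 4)],
      by linarith [min_le_right η (3 / 4)]⟩
  let G : EuclideanSpace ℝ (Fin n) → ℝ := fun x => max (infDist x K) (‖x‖ - 1 / 4) - ε
  have hG : Continuous G := ((continuous_infDist_pt K).max (by fun_prop)).sub continuous_const
  obtain ⟨f, hf1, hf2, hfpos⟩ :=
    exists_pev_near_on_ball_pos_outside hG zero_le_one one_lt_two one_le_two hε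
  refine ⟨f, fun x hx => ?_, fun x hx => ?_, fun x hx => ?_⟩
  · have hx' : ‖x‖ < 1 / 4 := mem_ball_zero_iff.1 (hKsub hx)
    have hGx : G x = -ε := by simp [G, infDist_zero_of_mem hx]; linarith
    linarith [(abs_lt.1 (hf1 x (by linarith))).2]
  · rcases le_or_gt ‖x‖ 2 with hx2 | hx2
    · linarith [hf2 x hx2, le_max_left (infDist x K) (‖x‖ - 1 / 4)]
    · exact absurd hx (hfpos x hx2).not_ge
  · rcases le_or_gt ‖x‖ 2 with hx2 | hx2
    · linarith [hf2 x hx2, le_max_right (infDist x K) (‖x‖ - 1 / 4)]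
    · exact hfpos x hx2

/-- polynomial approximation of a compact set `K ⊂ B_{1/4}`: a
polynomial `f` with `K ⊆ {f ≤ 0}`, `{f ≤ 0}` within distance `η` from `K`, and
`f > 0` outside the unit ball. -/
theorem statement19 (n : ℕ) (hn : 1 ≤ n)
    (K : Set (EuclideanSpace ℝ (Fin n))) (hK : IsCompact K) (hKne : K.Nonempty)
    (hKsub : K ⊆ Metric.ball 0 (1 / 4)) (η : ℝ) (hη : 0 < η) :
    ∃ f : MvPolynomial (Fin n) ℝ,
      (∀ x ∈ K, pev f x ≤ 0) ∧
      (∀ x : EuclideanSpace ℝ (Fin n), pev f x ≤ 0 → Metric.infDist x K ≤ η) ∧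
      (∀ x : EuclideanSpace ℝ (Fin n), 1 < ‖x‖ → 0 < pev f x) :=
  statement19_general n K hKsub η hη

end
end
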